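/- arXiv:1810.07956 — 2 statements merged into one kernel-verified Lean document; each statement's English description precedes it below -/
import Mathlib

section
/- For all n ≥ 0, the tangent number satisfies E_{2n+1} = (1/2^n)·(−A_{2n+1,n} + 2·Σ_{i=0}^{⌊n/2⌋} (−1)^i A_{2n+1,n−2i}), where A_{m,k} are Eulerian numbers and E_m is the number of alternating permutations of [m]. -/
open Finset

/-- The set of (0-based) descent indices of a permutation of `Fin n`:
`i` is a descent index if `π i > π (i+1)` (so the 1-based descent position is `i+1`). -/
def descentSet {n : ℕ} (π : Equiv.Perm (Fin n)) : Finset ℕ :=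
  (Finset.range n).filter
    (fun i => ∃ h : i + 1 < n, π ⟨i + 1, h⟩ < π ⟨i, Nat.lt_of_succ_lt h⟩)

/-- The number of descents of `π`. -/
def des {n : ℕ} (π : Equiv.Perm (Fin n)) : ℕ := (descentSet π).card

/-- The number of descents of `π` at odd (1-based) positions, i.e. even 0-based indices. -/
def odes {n : ℕ} (π : Equiv.Perm (Fin n)) : ℕ :=
  ((descentSet π).filter (fun i => Even i)).card

/-- The number of descents of `π` at even (1-based) positions, i.e. odd 0-based indices. -/
def edes {n : ℕ} (π : Equiv.Perm (Fin n)) : ℕ :=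
  ((descentSet π).filter (fun i => Odd i)).card

/-- The refined Eulerian polynomial `A_n(p,q) = Σ_π p^{odes π} q^{edes π}`. -/
def refinedEulerian (n : ℕ) (p q : ℝ) : ℝ :=
  ∑ π : Equiv.Perm (Fin n), p ^ odes π * q ^ edes π

/-- The Eulerian polynomial `A_n(q) = Σ_π q^{des π}` as a function. -/
def eulerianEval (n : ℕ) (q : ℝ) : ℝ :=
  ∑ π : Equiv.Perm (Fin n), q ^ des π

/-- The Eulerian polynomial `A_n(q)` as a polynomial. -/
noncomputable def eulerianPolynomial (n : ℕ) : Polynomial ℝ :=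
  ∑ π : Equiv.Perm (Fin n), Polynomial.X ^ des π

/-- The Eulerian number `A_{n,k}`: the number of permutations of `[n]` with `k` descents. -/
def eulerianNumber (n k : ℕ) : ℕ :=
  (Finset.univ.filter (fun π : Equiv.Perm (Fin n) => des π = k)).card

/-- A permutation `a_1 a_2 … a_n` is alternating if `a_1 > a_2 < a_3 > ⋯`. -/
def IsAlternating {n : ℕ} (π : Equiv.Perm (Fin n)) : Prop :=
  ∀ i : ℕ, ∀ h : i + 1 < n,
    (π ⟨i + 1, h⟩ < π ⟨i, Nat.lt_of_succ_lt h⟩ ↔ Even i)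

open scoped Classical in
/-- The Euler number `E_n`: the number of alternating permutations of `[n]`. -/
noncomputable def eulerNumber (n : ℕ) : ℕ :=
  (Finset.univ.filter (fun π : Equiv.Perm (Fin n) => IsAlternating π)).card

/-- `a_{n,k}`: the number of permutations of `[n]` with `k` even descents and no odd descents. -/
def aNum (n k : ℕ) : ℕ :=
  (Finset.univ.filter (fun π : Equiv.Perm (Fin n) => edes π = k ∧ odes π = 0)).card

namespace EulerAux

lemma mem_descentSet {M : ℕ} (π : Equiv.Perm (Fin M)) (i : ℕ) :
    i ∈ descentSet π ↔ ∃ h : i + 1 < M, π ⟨i + 1, h⟩ < π ⟨i, Nat.lt_of_succ_lt h⟩ := by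
  simp only [descentSet, Finset.mem_filter, Finset.mem_range]
  constructor
  · rintro ⟨-, h⟩; exact h
  · rintro ⟨h, h2⟩; exact ⟨by omega, h, h2⟩

lemma descentSet_subset {M : ℕ} (π : Equiv.Perm (Fin M)) :
    descentSet π ⊆ Finset.range (M - 1) := by
  intro i hi
  rw [mem_descentSet] at hi
  obtain ⟨h, -⟩ := hi
  simp only [Finset.mem_range]; omega

lemma des_le {M : ℕ} (π : Equiv.Perm (Fin M)) : des π ≤ M - 1 := by
  have := Finset.card_le_card (descentSet_subset π)
  simpa [des] using this

/-- The forward map: append a new last entry of rank `r`. -/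
def appFun {m : ℕ} (r : Fin (m + 2)) (σ : Equiv.Perm (Fin (m + 1))) (j : Fin (m + 2)) :
    Fin (m + 2) :=
  if h : (j : ℕ) < m + 1 then r.succAbove (σ ⟨j, h⟩) else r

lemma appFun_bijective {m : ℕ} (r : Fin (m + 2)) (σ : Equiv.Perm (Fin (m + 1))) :
    Function.Bijective (appFun r σ) := by
  constructor
  · intro a b hab
    unfold appFun at hab
    split_ifs at hab with h1 h2 h2
    · have := Fin.succAbove_right_injective (p := r) hab
      have := σ.injective this
      apply Fin.ext
      simpa [Fin.ext_iff] using this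
    · exact absurd hab (Fin.succAbove_ne r _)
    · exact absurd hab.symm (Fin.succAbove_ne r _)
    · apply Fin.ext; omega
  · intro x
    by_cases hx : x = r
    · refine ⟨⟨m + 1, by omega⟩, ?_⟩
      simp [appFun, hx]
    · obtain ⟨z, hz⟩ := Fin.exists_succAbove_eq hx
      refine ⟨⟨(σ.symm z : ℕ), by omega⟩, ?_⟩
      have h : ((σ.symm z : ℕ)) < m + 1 := (σ.symm z).isLt
      simp only [appFun, dif_pos h]
      rw [show (⟨(σ.symm z : ℕ), _⟩ : Fin (m+1)) = σ.symm z from Fin.ext rfl]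
      rw [Equiv.apply_symm_apply]
      exact hz

/-- The permutation of `Fin (m+2)` obtained from `σ` by appending a last entry of rank `r`. -/
noncomputable def appPerm {m : ℕ} (r : Fin (m + 2)) (σ : Equiv.Perm (Fin (m + 1))) :
    Equiv.Perm (Fin (m + 2)) :=
  Equiv.ofBijective _ (appFun_bijective r σ)

lemma appPerm_apply {m : ℕ} (r : Fin (m + 2)) (σ : Equiv.Perm (Fin (m + 1)))
    (j : Fin (m + 2)) : appPerm r σ j = appFun r σ j := rfl

lemma appPerm_last {m : ℕ} (r : Fin (m + 2)) (σ : Equiv.Perm (Fin (m + 1))) :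
    appPerm r σ (Fin.last (m + 1)) = r := by
  simp [appPerm_apply, appFun, Fin.last]

lemma appPerm_castSucc {m : ℕ} (r : Fin (m + 2)) (σ : Equiv.Perm (Fin (m + 1)))
    (i : ℕ) (h : i < m + 1) :
    appPerm r σ ⟨i, by omega⟩ = r.succAbove (σ ⟨i, h⟩) := by
  simp [appPerm_apply, appFun, h]

/-- Pointwise descent comparison, interior indices. -/
lemma app_lt_iff {m : ℕ} (r : Fin (m + 2)) (σ : Equiv.Perm (Fin (m + 1)))
    (i : ℕ) (h : i + 1 < m + 1) :
    (appPerm r σ ⟨i + 1, by omega⟩ < appPerm r σ ⟨i, by omega⟩) ↔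
      σ ⟨i + 1, h⟩ < σ ⟨i, Nat.lt_of_succ_lt h⟩ := by
  rw [appPerm_castSucc r σ (i+1) h, appPerm_castSucc r σ i (by omega)]
  exact Fin.succAbove_lt_succAbove_iff

/-- Pointwise descent comparison at the last index `m`. -/
lemma app_lt_last_iff {m : ℕ} (r : Fin (m + 2)) (σ : Equiv.Perm (Fin (m + 1))) :
    (appPerm r σ ⟨m + 1, by omega⟩ < appPerm r σ ⟨m, by omega⟩) ↔
      (r : ℕ) ≤ (σ (Fin.last m) : ℕ) := by
  have h1 : appPerm r σ ⟨m + 1, by omega⟩ = r := by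
    simpa [Fin.last] using appPerm_last r σ
  rw [h1, appPerm_castSucc r σ m (by omega)]
  rw [show (⟨m, by omega⟩ : Fin (m+1)) = Fin.last m from rfl]
  rw [Fin.lt_succAbove_iff_le_castSucc]
  simp [Fin.le_def]

lemma descentSet_appPerm {m : ℕ} (r : Fin (m + 2)) (σ : Equiv.Perm (Fin (m + 1))) :
    descentSet (appPerm r σ) =
      if (r : ℕ) ≤ (σ (Fin.last m) : ℕ) then insert m (descentSet σ) else descentSet σ := by
  ext i
  rw [mem_descentSet]
  by_cases him : i < m
  · have hi1 : i + 1 < m + 1 := by omega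
    have : (∃ h : i + 1 < m + 2, (appPerm r σ) ⟨i + 1, h⟩ < (appPerm r σ) ⟨i, Nat.lt_of_succ_lt h⟩)
        ↔ σ ⟨i + 1, hi1⟩ < σ ⟨i, Nat.lt_of_succ_lt hi1⟩ := by
      constructor
      · rintro ⟨h9, hlt⟩
        exact (app_lt_iff r σ i hi1).mp hlt
      · intro hlt
        exact ⟨by omega, (app_lt_iff r σ i hi1).mpr hlt⟩
    rw [this]
    have hmem : i ∈ descentSet σ ↔ σ ⟨i + 1, hi1⟩ < σ ⟨i, Nat.lt_of_succ_lt hi1⟩ := by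
      rw [mem_descentSet]
      constructor
      · rintro ⟨h9, hlt⟩; exact hlt
      · intro hlt; exact ⟨hi1, hlt⟩
    split_ifs with hc
    · rw [Finset.mem_insert]
      constructor
      · intro hh; exact Or.inr (hmem.mpr hh)
      · rintro (hh | hh); · omega
        · exact hmem.mp hh
    · rw [hmem]
  · by_cases him2 : i = m
    · rw [him2]
      have hnot : m ∉ descentSet σ := by
        intro hc; have := descentSet_subset σ hc; rw [Finset.mem_range] at this; omega
      have heq : (∃ h : m + 1 < m + 2, (appPerm r σ) ⟨m + 1, h⟩ < (appPerm r σ) ⟨m, Nat.lt_of_succ_lt h⟩)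
          ↔ (r : ℕ) ≤ (σ (Fin.last m) : ℕ) := by
        constructor
        · rintro ⟨h9, hlt⟩; exact (app_lt_last_iff r σ).mp hlt
        · intro hle; exact ⟨by omega, (app_lt_last_iff r σ).mpr hle⟩
      rw [heq]
      split_ifs with hc
      · simp [Finset.mem_insert, hc, hnot]
      · simp [hc, hnot]
    · have hnot : i ∉ descentSet σ := by
        intro hc; have := descentSet_subset σ hc; rw [Finset.mem_range] at this; omega
      have hl : ¬ (∃ h : i + 1 < m + 2,
          (appPerm r σ) ⟨i + 1, h⟩ < (appPerm r σ) ⟨i, Nat.lt_of_succ_lt h⟩) := by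
        rintro ⟨h9, hlt⟩; omega
      split_ifs with hc
      · simp only [Finset.mem_insert]
        constructor
        · intro hh; exact absurd hh hl
        · rintro (hh | hh)
          · omega
          · exact absurd hh hnot
      · constructor
        · intro hh; exact absurd hh hl
        · intro hh; exact absurd hh hnot

lemma des_appPerm {m : ℕ} (r : Fin (m + 2)) (σ : Equiv.Perm (Fin (m + 1))) :
    des (appPerm r σ) =
      des σ + if (r : ℕ) ≤ (σ (Fin.last m) : ℕ) then 1 else 0 := by
  unfold des
  rw [descentSet_appPerm]
  split_ifs with hc
  · rw [Finset.card_insert_of_notMem]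
    intro hc2; have := descentSet_subset σ hc2; rw [Finset.mem_range] at this; omega
  · omega

lemma isAlternating_appPerm {m : ℕ} (r : Fin (m + 2)) (σ : Equiv.Perm (Fin (m + 1))) :
    IsAlternating (appPerm r σ) ↔
      (IsAlternating σ ∧ (((r : ℕ) ≤ (σ (Fin.last m) : ℕ)) ↔ Even m)) := by
  constructor
  · intro H
    constructor
    · intro i h
      rw [← app_lt_iff r σ i h]
      exact H i (by omega)
    · rw [← app_lt_last_iff r σ]
      exact H m (by omega)
  · rintro ⟨H1, H2⟩ i h
    by_cases him : i + 1 < m + 1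
    · rw [app_lt_iff r σ i him]
      exact H1 i him
    · have : i = m := by omega
      subst this
      rw [app_lt_last_iff r σ]
      exact H2

end EulerAux

open scoped Classical

namespace EulerAux

/-- `DD m r = Σ_{π ∈ S_{m+1}, rank of last entry = r} I ^ des π`. -/
noncomputable def DD (m : ℕ) (r : ℕ) : ℂ :=
  ∑ π : Equiv.Perm (Fin (m + 1)),
    if ((π (Fin.last m) : ℕ) = r) then Complex.I ^ des π else 0

/-- `EE m r` = number of alternating `π ∈ S_{m+1}` with rank of last entry `r`. -/
noncomputable def EE (m : ℕ) (r : ℕ) : ℂ :=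
  ∑ π : Equiv.Perm (Fin (m + 1)),
    if ((π (Fin.last m) : ℕ) = r ∧ IsAlternating π) then (1 : ℂ) else 0

lemma ite_and' {A B : Prop} (x : ℂ) :
    (if A ∧ B then x else 0) = (if A then (if B then x else 0) else 0) := by
  split_ifs with h1 h2 h3 <;> simp_all

lemma sum_perm_succ {m : ℕ} (g : Equiv.Perm (Fin (m + 2)) → ℂ) :
    ∑ π : Equiv.Perm (Fin (m + 2)), g π
      = ∑ p : Fin (m + 2), ∑ σ : Equiv.Perm (Fin (m + 1)), g (appPerm p σ) := by
  have hinj : Function.Injective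
      (fun x : Fin (m + 2) × Equiv.Perm (Fin (m + 1)) => appPerm x.1 x.2) := by
    rintro ⟨p, σ⟩ ⟨p', σ'⟩ h
    simp only at h
    have hp : p = p' := by
      have := congrArg (fun π : Equiv.Perm (Fin (m+2)) => π (Fin.last (m+1))) h
      simpa [appPerm_last] using this
    subst hp
    have hσ : σ = σ' := by
      apply Equiv.ext
      intro i
      have := congrArg (fun π : Equiv.Perm (Fin (m+2)) => π ⟨(i : ℕ), by omega⟩) h
      rw [appPerm_castSucc p σ i i.isLt, appPerm_castSucc p σ' i i.isLt] at this
      have := Fin.succAbove_right_injective (p := p) this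
      simpa using this
    rw [hσ]
  have hbij : Function.Bijective
      (fun x : Fin (m + 2) × Equiv.Perm (Fin (m + 1)) => appPerm x.1 x.2) := by
    rw [Fintype.bijective_iff_injective_and_card]
    refine ⟨hinj, ?_⟩
    simp [Fintype.card_perm, Nat.factorial_succ]
  rw [← Fintype.sum_bijective _ hbij (fun x => g (appPerm x.1 x.2)) g (fun x => rfl)]
  rw [Fintype.sum_prod_type]

lemma sum_last_partition {m : ℕ} (f : Equiv.Perm (Fin (m + 1)) → ℂ) :
    ∑ σ : Equiv.Perm (Fin (m + 1)), f σ
      = ∑ s ∈ Finset.range (m + 1), ∑ σ : Equiv.Perm (Fin (m + 1)),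
          if ((σ (Fin.last m) : ℕ) = s) then f σ else 0 := by
  rw [Finset.sum_comm]
  apply Finset.sum_congr rfl
  intro σ _
  rw [Finset.sum_ite_eq]
  exact (if_pos (Finset.mem_range.mpr (σ (Fin.last m)).isLt)).symm

lemma DD_rec {m : ℕ} (r : ℕ) (hr : r < m + 2) :
    DD (m + 1) r = ∑ s ∈ Finset.range (m + 1),
      (if r ≤ s then Complex.I else 1) * DD m s := by
  unfold DD
  rw [sum_perm_succ]
  have step1 : ∀ p : Fin (m + 2), ∀ σ : Equiv.Perm (Fin (m + 1)),
      (if (((appPerm p σ) (Fin.last (m + 1)) : ℕ) = r)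
        then Complex.I ^ des (appPerm p σ) else 0)
      = if p = (⟨r, hr⟩ : Fin (m + 2))
          then (if r ≤ (σ (Fin.last m) : ℕ) then Complex.I else 1) * Complex.I ^ des σ
          else 0 := by
    intro p σ
    have hiff : (((appPerm p σ) (Fin.last (m + 1)) : ℕ) = r) ↔ p = (⟨r, hr⟩ : Fin (m + 2)) := by
      rw [appPerm_last]
      exact ⟨fun h => Fin.ext h, fun h => by rw [h]⟩
    rw [if_congr hiff rfl rfl]
    by_cases hp : p = (⟨r, hr⟩ : Fin (m + 2))
    · rw [if_pos hp, if_pos hp, des_appPerm, pow_add]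
      have hv : (p : ℕ) = r := by rw [hp]
      rw [hv]
      split_ifs with h1
      · rw [pow_one]; ring
      · rw [pow_zero]; ring
    · rw [if_neg hp, if_neg hp]
  calc ∑ p : Fin (m + 2), ∑ σ : Equiv.Perm (Fin (m + 1)),
        (if (((appPerm p σ) (Fin.last (m + 1)) : ℕ) = r)
          then Complex.I ^ des (appPerm p σ) else 0)
      = ∑ p : Fin (m + 2), ∑ σ : Equiv.Perm (Fin (m + 1)),
          (if p = (⟨r, hr⟩ : Fin (m + 2))
            then (if r ≤ (σ (Fin.last m) : ℕ) then Complex.I else 1) * Complex.I ^ des σ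
            else 0) := by
        apply Finset.sum_congr rfl; intro p _; apply Finset.sum_congr rfl; intro σ _
        exact step1 p σ
    _ = ∑ σ : Equiv.Perm (Fin (m + 1)),
          (if r ≤ (σ (Fin.last m) : ℕ) then Complex.I else 1) * Complex.I ^ des σ := by
        rw [Finset.sum_comm]
        apply Finset.sum_congr rfl; intro σ _
        rw [Finset.sum_ite_eq']
        simp
    _ = ∑ s ∈ Finset.range (m + 1), ∑ σ : Equiv.Perm (Fin (m + 1)),
          if ((σ (Fin.last m) : ℕ) = s) then
            (if r ≤ (σ (Fin.last m) : ℕ) then Complex.I else 1) * Complex.I ^ des σ else 0 := by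
        exact sum_last_partition _
    _ = ∑ s ∈ Finset.range (m + 1), (if r ≤ s then Complex.I else 1) * DD m s := by
        apply Finset.sum_congr rfl; intro s _
        unfold DD
        rw [Finset.mul_sum]
        apply Finset.sum_congr rfl; intro σ _
        by_cases h : ((σ (Fin.last m) : ℕ) = s)
        · rw [if_pos h, if_pos h, h]
        · rw [if_neg h, if_neg h, mul_zero]

lemma EE_rec {m : ℕ} (r : ℕ) (hr : r < m + 2) :
    EE (m + 1) r = ∑ s ∈ Finset.range (m + 1),
      (if ((r ≤ s) ↔ Even m) then (1:ℂ) else 0) * EE m s := by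
  unfold EE
  rw [sum_perm_succ]
  have step1 : ∀ p : Fin (m + 2), ∀ σ : Equiv.Perm (Fin (m + 1)),
      (if (((appPerm p σ) (Fin.last (m + 1)) : ℕ) = r ∧ IsAlternating (appPerm p σ))
        then (1:ℂ) else 0)
      = if p = (⟨r, hr⟩ : Fin (m + 2))
          then (if (((r ≤ (σ (Fin.last m) : ℕ)) ↔ Even m) ∧ IsAlternating σ) then (1:ℂ) else 0)
          else 0 := by
    intro p σ
    have hiff : ((((appPerm p σ) (Fin.last (m + 1)) : ℕ) = r ∧ IsAlternating (appPerm p σ)))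
        ↔ (p = (⟨r, hr⟩ : Fin (m + 2)) ∧
            ((r ≤ (σ (Fin.last m) : ℕ) ↔ Even m) ∧ IsAlternating σ)) := by
      rw [appPerm_last, isAlternating_appPerm]
      constructor
      · rintro ⟨h1, h2, h3⟩
        rw [h1] at h3
        exact ⟨Fin.ext h1, ⟨h3, h2⟩⟩
      · rintro ⟨h1, h2, h3⟩
        have hv : (p : ℕ) = r := by rw [h1]
        rw [hv]
        exact ⟨rfl, h3, h2⟩
    rw [if_congr hiff rfl rfl]
    by_cases hp : p = (⟨r, hr⟩ : Fin (m + 2))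
    · by_cases hC : ((r ≤ (σ (Fin.last m) : ℕ) ↔ Even m) ∧ IsAlternating σ)
      · rw [if_pos ⟨hp, hC⟩, if_pos hp, if_pos hC]
      · rw [if_neg (by tauto), if_pos hp, if_neg hC]
    · rw [if_neg (by tauto), if_neg hp]
  calc ∑ p : Fin (m + 2), ∑ σ : Equiv.Perm (Fin (m + 1)),
        (if (((appPerm p σ) (Fin.last (m + 1)) : ℕ) = r ∧ IsAlternating (appPerm p σ))
          then (1:ℂ) else 0)
      = ∑ p : Fin (m + 2), ∑ σ : Equiv.Perm (Fin (m + 1)),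
          (if p = (⟨r, hr⟩ : Fin (m + 2))
            then (if (((r ≤ (σ (Fin.last m) : ℕ)) ↔ Even m) ∧ IsAlternating σ) then (1:ℂ) else 0)
            else 0) := by
        apply Finset.sum_congr rfl; intro p _; apply Finset.sum_congr rfl; intro σ _
        exact step1 p σ
    _ = ∑ σ : Equiv.Perm (Fin (m + 1)),
          (if (((r ≤ (σ (Fin.last m) : ℕ)) ↔ Even m) ∧ IsAlternating σ) then (1:ℂ) else 0) := by
        rw [Finset.sum_comm]
        apply Finset.sum_congr rfl; intro σ _
        rw [Finset.sum_ite_eq']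
        simp
    _ = ∑ s ∈ Finset.range (m + 1), ∑ σ : Equiv.Perm (Fin (m + 1)),
          if ((σ (Fin.last m) : ℕ) = s) then
            (if (((r ≤ (σ (Fin.last m) : ℕ)) ↔ Even m) ∧ IsAlternating σ) then (1:ℂ) else 0)
          else 0 := sum_last_partition _
    _ = ∑ s ∈ Finset.range (m + 1), (if ((r ≤ s) ↔ Even m) then (1:ℂ) else 0) * EE m s := by
        apply Finset.sum_congr rfl; intro s _
        unfold EE
        rw [Finset.mul_sum]
        apply Finset.sum_congr rfl; intro σ _
        by_cases h : ((σ (Fin.last m) : ℕ) = s)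
        · rw [if_pos h, h]
          by_cases hC : ((r ≤ s) ↔ Even m) <;> by_cases hA : IsAlternating σ <;>
            simp [hC, hA]
        · rw [if_neg h,
            if_neg (show ¬(((σ (Fin.last m) : ℕ) = s) ∧ IsAlternating σ) from fun hc => h hc.1),
            mul_zero]

end EulerAux

namespace EulerAux

open Complex in
lemma base0 : DD 0 0 = 1 ∧ EE 0 0 = 1 := by
  have hdes : ∀ π : Equiv.Perm (Fin 1), des π = 0 := by
    intro π
    have : descentSet π = ∅ := by
      ext i
      rw [mem_descentSet]
      simp only [Finset.notMem_empty, iff_false]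
      rintro ⟨h, -⟩
      omega
    simp [des, this]
  have hlast : ∀ π : Equiv.Perm (Fin 1), ((π (Fin.last 0) : ℕ)) = 0 := by
    intro π
    omega
  have halt : ∀ π : Equiv.Perm (Fin 1), IsAlternating π := by
    intro π i h
    omega
  constructor
  · unfold DD
    have : ∀ π : Equiv.Perm (Fin 1),
        (if ((π (Fin.last 0) : ℕ) = 0) then Complex.I ^ des π else 0) = 1 := by
      intro π
      rw [if_pos (hlast π), hdes π, pow_zero]
    rw [Finset.sum_congr rfl (fun π _ => this π)]
    simp [Finset.card_univ, Fintype.card_perm]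
  · unfold EE
    have : ∀ π : Equiv.Perm (Fin 1),
        (if ((π (Fin.last 0) : ℕ) = 0 ∧ IsAlternating π) then (1:ℂ) else 0) = 1 := by
      intro π
      rw [if_pos ⟨hlast π, halt π⟩]
    rw [Finset.sum_congr rfl (fun π _ => this π)]
    simp [Finset.card_univ, Fintype.card_perm]

lemma sumsplit (F G : ℕ → ℂ) (a b : ℂ) (S : Finset ℕ) :
    a * (∑ s ∈ S, F s) + b * (∑ s ∈ S, G s) = ∑ s ∈ S, (a * F s + b * G s) := by
  rw [Finset.mul_sum, Finset.mul_sum, ← Finset.sum_add_distrib]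

lemma stepA (n : ℕ)
    (IH : ∀ r ≤ 2*n, DD (2*n) r = (2*Complex.I)^n *
        ((1+Complex.I) * EE (2*n) (2*n - r) + (1-Complex.I) * EE (2*n) r) / 2) :
    ∀ r ≤ 2*n+1, DD (2*n+1) r = (2*Complex.I)^n *
        (EE (2*n+1) (2*n+1-r) + Complex.I * EE (2*n+1) r) := by
  intro r hr
  have hQ : ∀ t, t ≤ 2*n+1 → EE (2*n+1) t
      = ∑ s ∈ Finset.range (2*n+1), (if t ≤ s then (1:ℂ) else 0) * EE (2*n) s := by
    intro t ht
    rw [EE_rec t (by omega)]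
    apply Finset.sum_congr rfl
    intro s _
    have he : Even (2*n) := even_two_mul n
    by_cases h : t ≤ s <;> simp [h, he]
  -- F2
  have F2 : ∑ s ∈ Finset.range (2*n+1), (if r ≤ s then Complex.I else 1) * EE (2*n) s
      = (∑ s ∈ Finset.range (2*n+1), EE (2*n) s)
        + (Complex.I - 1) * EE (2*n+1) r := by
    rw [hQ r (by omega), Finset.mul_sum, ← Finset.sum_add_distrib]
    apply Finset.sum_congr rfl
    intro s _
    by_cases h : r ≤ s
    · simp only [if_pos h]; ring
    · simp only [if_neg h]; ring
  -- reflection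
  have refl1 : ∑ s ∈ Finset.range (2*n+1),
        (if r ≤ s then Complex.I else 1) * EE (2*n) (2*n - s)
      = ∑ s ∈ Finset.range (2*n+1),
        (if r + s ≤ 2*n then Complex.I else 1) * EE (2*n) s := by
    apply Finset.sum_nbij' (fun s => 2*n - s) (fun s => 2*n - s)
    · intro a ha; rw [Finset.mem_range] at *; omega
    · intro a ha; rw [Finset.mem_range] at *; omega
    · intro a ha; rw [Finset.mem_range] at ha; omega
    · intro a ha; rw [Finset.mem_range] at ha; omega
    · intro a ha
      rw [Finset.mem_range] at ha
      exact congrArg₂ _ (if_congr (by omega) rfl rfl) rfl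
  have F1 : ∑ s ∈ Finset.range (2*n+1),
        (if r + s ≤ 2*n then Complex.I else 1) * EE (2*n) s
      = (∑ s ∈ Finset.range (2*n+1), EE (2*n) s)
        + (Complex.I - 1) * ((∑ s ∈ Finset.range (2*n+1), EE (2*n) s)
            - EE (2*n+1) (2*n+1-r)) := by
    rw [hQ (2*n+1-r) (by omega), ← Finset.sum_sub_distrib, Finset.mul_sum,
      ← Finset.sum_add_distrib]
    apply Finset.sum_congr rfl
    intro s _
    by_cases h : r + s ≤ 2*n
    · rw [if_pos h, if_neg (by omega : ¬ (2*n+1-r ≤ s))]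
      ring
    · rw [if_neg h, if_pos (by omega : 2*n+1-r ≤ s)]
      ring
  -- main computation
  rw [DD_rec r (by omega)]
  have hsplit : ∑ s ∈ Finset.range (2*n+1),
        (if r ≤ s then Complex.I else 1) * DD (2*n) s
      = (2*Complex.I)^n / 2 *
          ((1+Complex.I) * (∑ s ∈ Finset.range (2*n+1),
              (if r ≤ s then Complex.I else 1) * EE (2*n) (2*n - s))
            + (1-Complex.I) * (∑ s ∈ Finset.range (2*n+1),
              (if r ≤ s then Complex.I else 1) * EE (2*n) s)) := by
    rw [sumsplit, Finset.mul_sum]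
    apply Finset.sum_congr rfl
    intro s hs
    rw [Finset.mem_range] at hs
    rw [IH s (by omega)]
    ring
  rw [hsplit, refl1, F1, F2]
  linear_combination ((2*Complex.I)^n *
      ((∑ s ∈ Finset.range (2*n+1), EE (2*n) s)
        - EE (2*n+1) (2*n+1-r) - EE (2*n+1) r) / 2) * Complex.I_sq

lemma stepB (n : ℕ)
    (IH : ∀ r ≤ 2*n+1, DD (2*n+1) r = (2*Complex.I)^n *
        (EE (2*n+1) (2*n+1-r) + Complex.I * EE (2*n+1) r)) :
    ∀ r ≤ 2*n+2, DD (2*n+2) r = (2*Complex.I)^(n+1) *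
        ((1+Complex.I) * EE (2*n+2) (2*n+2 - r) + (1-Complex.I) * EE (2*n+2) r) / 2 := by
  intro r hr
  have hP : ∀ t, t ≤ 2*n+2 → EE (2*n+2) t
      = ∑ s ∈ Finset.range (2*n+2), (if s < t then (1:ℂ) else 0) * EE (2*n+1) s := by
    intro t ht
    have h0 : EE (2*n+1+1) t = ∑ s ∈ Finset.range (2*n+1+1),
        (if ((t ≤ s) ↔ Even (2*n+1)) then (1:ℂ) else 0) * EE (2*n+1) s :=
      EE_rec (m := 2*n+1) t (by omega)
    rw [h0]
    apply Finset.sum_congr rfl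
    intro s _
    have he : ¬ Even (2*n+1) := by rw [Nat.even_iff]; omega
    by_cases h : t ≤ s
    · simp [h, he, show ¬ (s < t) by omega]
    · simp [h, he, show s < t by omega]
  have F2 : ∑ s ∈ Finset.range (2*n+2), (if r ≤ s then Complex.I else 1) * EE (2*n+1) s
      = (∑ s ∈ Finset.range (2*n+2), EE (2*n+1) s)
        + (Complex.I - 1) * ((∑ s ∈ Finset.range (2*n+2), EE (2*n+1) s)
            - EE (2*n+2) r) := by
    rw [hP r (by omega), ← Finset.sum_sub_distrib, Finset.mul_sum, ← Finset.sum_add_distrib]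
    apply Finset.sum_congr rfl
    intro s _
    by_cases h : r ≤ s
    · rw [if_pos h, if_neg (by omega : ¬ (s < r))]
      ring
    · rw [if_neg h, if_pos (by omega : s < r)]
      ring
  have refl1 : ∑ s ∈ Finset.range (2*n+2),
        (if r ≤ s then Complex.I else 1) * EE (2*n+1) (2*n+1 - s)
      = ∑ s ∈ Finset.range (2*n+2),
        (if r + s ≤ 2*n+1 then Complex.I else 1) * EE (2*n+1) s := by
    apply Finset.sum_nbij' (fun s => 2*n+1 - s) (fun s => 2*n+1 - s)
    · intro a ha; rw [Finset.mem_range] at *; omega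
    · intro a ha; rw [Finset.mem_range] at *; omega
    · intro a ha; rw [Finset.mem_range] at ha; omega
    · intro a ha; rw [Finset.mem_range] at ha; omega
    · intro a ha
      rw [Finset.mem_range] at ha
      exact congrArg₂ _ (if_congr (by omega) rfl rfl) rfl
  have F1 : ∑ s ∈ Finset.range (2*n+2),
        (if r + s ≤ 2*n+1 then Complex.I else 1) * EE (2*n+1) s
      = (∑ s ∈ Finset.range (2*n+2), EE (2*n+1) s)
        + (Complex.I - 1) * EE (2*n+2) (2*n+2-r) := by
    rw [hP (2*n+2-r) (by omega), Finset.mul_sum, ← Finset.sum_add_distrib]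
    apply Finset.sum_congr rfl
    intro s hs
    rw [Finset.mem_range] at hs
    by_cases h : r + s ≤ 2*n+1
    · rw [if_pos h, if_pos (by omega : s < 2*n+2-r)]
      ring
    · rw [if_neg h, if_neg (by omega : ¬ (s < 2*n+2-r))]
      ring
  have hrec : DD (2*n+2) r = ∑ s ∈ Finset.range (2*n+2),
      (if r ≤ s then Complex.I else 1) * DD (2*n+1) s :=
    DD_rec (m := 2*n+1) r (by omega)
  have hsplit : ∑ s ∈ Finset.range (2*n+2),
        (if r ≤ s then Complex.I else 1) * DD (2*n+1) s
      = (2*Complex.I)^n *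
          ((∑ s ∈ Finset.range (2*n+2),
              (if r ≤ s then Complex.I else 1) * EE (2*n+1) (2*n+1 - s))
            + Complex.I * (∑ s ∈ Finset.range (2*n+2),
              (if r ≤ s then Complex.I else 1) * EE (2*n+1) s)) := by
    have hss := sumsplit
      (fun s => (if r ≤ s then Complex.I else 1) * EE (2*n+1) (2*n+1 - s))
      (fun s => (if r ≤ s then Complex.I else 1) * EE (2*n+1) s)
      1 Complex.I (Finset.range (2*n+2))
    rw [one_mul] at hss
    rw [hss, Finset.mul_sum]
    apply Finset.sum_congr rfl
    intro s hs
    rw [Finset.mem_range] at hs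
    rw [IH s (by omega)]
    ring
  rw [hrec, hsplit, refl1, F1, F2]
  linear_combination ((2*Complex.I)^n *
      ((∑ s ∈ Finset.range (2*n+2), EE (2*n+1) s) - EE (2*n+2) (2*n+2-r)))
    * Complex.I_sq

lemma keyOdd : ∀ n : ℕ, ∀ r ≤ 2*n, DD (2*n) r = (2*Complex.I)^n *
    ((1+Complex.I) * EE (2*n) (2*n - r) + (1-Complex.I) * EE (2*n) r) / 2 := by
  intro n
  induction n with
  | zero =>
    intro r hr
    have hr0 : r = 0 := by omega
    subst hr0
    obtain ⟨h1, h2⟩ := base0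
    simp only [show 2*0 = 0 from rfl, show 0-0 = 0 from rfl, pow_zero]
    rw [h1, h2]
    ring
  | succ k ih =>
    have hB := stepB k (stepA k ih)
    intro r hr
    simp only [show 2*(k+1) = 2*k+2 from by ring] at hB hr ⊢
    exact hB r hr

lemma keyEven : ∀ n : ℕ, ∀ r ≤ 2*n+1, DD (2*n+1) r = (2*Complex.I)^n *
    (EE (2*n+1) (2*n+1-r) + Complex.I * EE (2*n+1) r) := fun n => stepA n (keyOdd n)

end EulerAux

namespace EulerAux

/-- Total of the Entringer-type counts: the Euler number. -/
lemma EE_total (m : ℕ) :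
    ∑ r ∈ Finset.range (m + 1), EE m r = (eulerNumber (m + 1) : ℂ) := by
  unfold EE
  rw [Finset.sum_comm]
  have h1 : ∀ π : Equiv.Perm (Fin (m + 1)),
      (∑ r ∈ Finset.range (m + 1),
        if ((π (Fin.last m) : ℕ) = r ∧ IsAlternating π) then (1:ℂ) else 0)
      = if IsAlternating π then (1:ℂ) else 0 := by
    intro π
    by_cases hA : IsAlternating π
    · have h2 : ∀ r, (if ((π (Fin.last m) : ℕ) = r ∧ IsAlternating π) then (1:ℂ) else 0)
          = if ((π (Fin.last m) : ℕ) = r) then (1:ℂ) else 0 := fun r => by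
        by_cases h : (π (Fin.last m) : ℕ) = r <;> simp [h, hA]
      rw [Finset.sum_congr rfl (fun r _ => h2 r), Finset.sum_ite_eq]
      simp [hA, Nat.lt_succ_iff.mp (π (Fin.last m)).isLt]
    · simp [hA]
  rw [Finset.sum_congr rfl (fun π _ => h1 π), Finset.sum_boole]
  unfold eulerNumber
  norm_num

lemma Atotal (n : ℕ) :
    (∑ π : Equiv.Perm (Fin (2*n + 1)), Complex.I ^ des π)
      = (2*Complex.I)^n * (eulerNumber (2*n + 1) : ℂ) := by
  rw [sum_last_partition (m := 2*n) (fun π => Complex.I ^ des π)]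
  have hdd : (∑ s ∈ Finset.range (2*n + 1), ∑ σ : Equiv.Perm (Fin (2*n + 1)),
        if ((σ (Fin.last (2*n)) : ℕ) = s) then Complex.I ^ des σ else 0)
      = ∑ s ∈ Finset.range (2*n + 1), DD (2*n) s := rfl
  rw [hdd]
  have hkey : ∀ s ∈ Finset.range (2*n + 1), DD (2*n) s
      = (2*Complex.I)^n * ((1+Complex.I) * EE (2*n) (2*n - s)
          + (1-Complex.I) * EE (2*n) s) / 2 := by
    intro s hs
    rw [Finset.mem_range] at hs
    exact keyOdd n s (by omega)
  rw [Finset.sum_congr rfl hkey]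
  have hrefl : ∑ s ∈ Finset.range (2*n + 1), EE (2*n) (2*n - s)
      = ∑ s ∈ Finset.range (2*n + 1), EE (2*n) s := by
    apply Finset.sum_nbij' (fun s => 2*n - s) (fun s => 2*n - s)
    · intro a ha; rw [Finset.mem_range] at *; omega
    · intro a ha; rw [Finset.mem_range] at *; omega
    · intro a ha; rw [Finset.mem_range] at ha; omega
    · intro a ha; rw [Finset.mem_range] at ha; omega
    · intro a ha; rfl
  have hsplit : ∑ s ∈ Finset.range (2*n + 1),
        (2*Complex.I)^n * ((1+Complex.I) * EE (2*n) (2*n - s)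
          + (1-Complex.I) * EE (2*n) s) / 2
      = (2*Complex.I)^n / 2 *
          ((1+Complex.I) * (∑ s ∈ Finset.range (2*n + 1), EE (2*n) (2*n - s))
            + (1-Complex.I) * (∑ s ∈ Finset.range (2*n + 1), EE (2*n) s)) := by
    rw [sumsplit, Finset.mul_sum]
    apply Finset.sum_congr rfl
    intro s _
    ring
  rw [hsplit, hrefl, EE_total (2*n)]
  ring

lemma Asum_eulerian (n : ℕ) :
    (∑ π : Equiv.Perm (Fin (2*n + 1)), Complex.I ^ des π)
      = ∑ j ∈ Finset.range (2*n + 1), (eulerianNumber (2*n + 1) j : ℂ) * Complex.I ^ j := by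
  have hpart : (∑ π : Equiv.Perm (Fin (2*n + 1)), Complex.I ^ des π)
      = ∑ j ∈ Finset.range (2*n + 1), ∑ π : Equiv.Perm (Fin (2*n + 1)),
          if des π = j then Complex.I ^ des π else 0 := by
    rw [Finset.sum_comm]
    apply Finset.sum_congr rfl
    intro π _
    rw [Finset.sum_ite_eq]
    have hlt : des π < 2*n + 1 := by have := des_le π; omega
    simp [hlt]
  rw [hpart]
  apply Finset.sum_congr rfl
  intro j _
  have h2 : ∀ π : Equiv.Perm (Fin (2*n + 1)),
      (if des π = j then Complex.I ^ des π else 0)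
      = (if des π = j then (1:ℂ) else 0) * Complex.I ^ j := fun π => by
    by_cases h : des π = j <;> simp [h]
  rw [Finset.sum_congr rfl (fun π _ => h2 π), ← Finset.sum_mul, Finset.sum_boole]
  unfold eulerianNumber
  norm_num

/-- Reversal/complement symmetry of Eulerian numbers. -/
lemma des_trans_rev {M : ℕ} (π : Equiv.Perm (Fin (M + 1))) :
    des (π.trans Fin.revPerm) = M - des π := by
  have hset : descentSet (π.trans Fin.revPerm) = Finset.range M \ descentSet π := by
    ext i
    rw [mem_descentSet, Finset.mem_sdiff, Finset.mem_range, mem_descentSet]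
    constructor
    · rintro ⟨h, hlt⟩
      simp only [Equiv.trans_apply, Fin.revPerm_apply] at hlt
      rw [Fin.rev_lt_rev] at hlt
      refine ⟨by omega, ?_⟩
      rintro ⟨h2, hlt2⟩
      exact absurd hlt2 (asymm hlt)
    · rintro ⟨hiM, hno⟩
      have h : i + 1 < M + 1 := by omega
      refine ⟨h, ?_⟩
      simp only [Equiv.trans_apply, Fin.revPerm_apply]
      rw [Fin.rev_lt_rev]
      have hne : π ⟨i, Nat.lt_of_succ_lt h⟩ ≠ π ⟨i + 1, h⟩ := by
        intro hcon
        have := π.injective hcon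
        simp [Fin.ext_iff] at this
      rcases hne.lt_or_gt with hl | hl
      · exact hl
      · exact absurd ⟨h, hl⟩ hno
  unfold des
  rw [hset, Finset.card_sdiff_of_subset]
  · rw [Finset.card_range]
  · intro i hi
    have := descentSet_subset π hi
    rw [Finset.mem_range] at *
    omega

lemma eulerian_symm (M k : ℕ) (hk : k ≤ M) :
    eulerianNumber (M + 1) k = eulerianNumber (M + 1) (M - k) := by
  unfold eulerianNumber
  apply Finset.card_bij' (fun π _ => π.trans Fin.revPerm) (fun σ _ => σ.trans Fin.revPerm)
  · intro π _
    apply Equiv.ext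
    intro x
    simp [Fin.rev_rev]
  · intro σ _
    apply Equiv.ext
    intro x
    simp [Fin.rev_rev]
  · intro π hπ
    rw [Finset.mem_filter] at *
    refine ⟨Finset.mem_univ _, ?_⟩
    rw [des_trans_rev, hπ.2]
  · intro σ hσ
    rw [Finset.mem_filter] at *
    refine ⟨Finset.mem_univ _, ?_⟩
    rw [des_trans_rev, hσ.2]
    omega

end EulerAux

namespace EulerAux

lemma pow_pair (n d : ℕ) (hd : d < n) :
    (Complex.I) ^ (n - 1 - d) + (Complex.I) ^ (n + 1 + d)
      = Complex.I ^ n * ((-Complex.I) ^ (d + 1) + Complex.I ^ (d + 1)) := by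
  have hsum : (n - 1 - d) + (d + 1) = n := by omega
  have h2 : Complex.I ^ (n - 1 - d) * Complex.I ^ (d + 1) = Complex.I ^ n := by
    rw [← pow_add, hsum]
  have h3 : (-Complex.I) ^ (d + 1) * Complex.I ^ (d + 1) = 1 := by
    have hI : (-Complex.I) * Complex.I = 1 := by
      rw [neg_mul, Complex.I_mul_I, neg_neg]
    rw [← mul_pow, hI, one_pow]
  have h4 : Complex.I ^ (n + 1 + d) = Complex.I ^ n * Complex.I ^ (d + 1) := by
    rw [← pow_add]
    congr 1
    omega
  linear_combination h4 + (-Complex.I) ^ (d + 1) * h2 - (Complex.I ^ (n - 1 - d)) * h3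

lemma pow_even_pair (i : ℕ) :
    (-Complex.I) ^ (2 * i) + Complex.I ^ (2 * i) = 2 * (-1 : ℂ) ^ i := by
  rw [pow_mul, pow_mul, neg_sq, Complex.I_sq]
  ring

lemma key8 (n : ℕ) :
    ∑ d ∈ Finset.range n, (eulerianNumber (2*n + 1) (n - 1 - d) : ℂ)
        * ((-Complex.I) ^ (d + 1) + Complex.I ^ (d + 1))
      = 2 * (∑ i ∈ Finset.range (n / 2 + 1),
          (-1 : ℂ) ^ i * (eulerianNumber (2*n + 1) (n - 2 * i) : ℂ))
        - 2 * (eulerianNumber (2*n + 1) n : ℂ) := by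
  have hfil : ∑ d ∈ (Finset.range n).filter (fun d => Odd d),
        (eulerianNumber (2*n + 1) (n - 1 - d) : ℂ)
          * ((-Complex.I) ^ (d + 1) + Complex.I ^ (d + 1))
      = ∑ d ∈ Finset.range n, (eulerianNumber (2*n + 1) (n - 1 - d) : ℂ)
          * ((-Complex.I) ^ (d + 1) + Complex.I ^ (d + 1)) := by
    apply Finset.sum_filter_of_ne
    intro d _ hne
    by_contra hodd
    apply hne
    have hodd1 : Odd (d + 1) :=
      Even.add_one ((Nat.even_or_odd d).resolve_right hodd)
    rw [Odd.neg_pow hodd1]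
    ring
  rw [← hfil]
  have hbij : ∑ d ∈ (Finset.range n).filter (fun d => Odd d),
        (eulerianNumber (2*n + 1) (n - 1 - d) : ℂ)
          * ((-Complex.I) ^ (d + 1) + Complex.I ^ (d + 1))
      = ∑ i ∈ (Finset.range (n / 2 + 1)).erase 0,
          2 * (-1 : ℂ) ^ i * (eulerianNumber (2*n + 1) (n - 2 * i) : ℂ) := by
    apply Finset.sum_nbij' (fun d => (d + 1) / 2) (fun i => 2 * i - 1)
    · intro a ha
      rw [Finset.mem_filter, Finset.mem_range] at ha
      have h1 := Nat.odd_iff.mp ha.2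
      rw [Finset.mem_erase, Finset.mem_range]
      omega
    · intro i hi
      rw [Finset.mem_erase, Finset.mem_range] at hi
      rw [Finset.mem_filter, Finset.mem_range]
      constructor
      · omega
      · rw [Nat.odd_iff]; omega
    · intro a ha
      rw [Finset.mem_filter, Finset.mem_range] at ha
      have h1 := Nat.odd_iff.mp ha.2
      omega
    · intro i hi
      rw [Finset.mem_erase, Finset.mem_range] at hi
      omega
    · intro d hd
      rw [Finset.mem_filter, Finset.mem_range] at hd
      have h1 := Nat.odd_iff.mp hd.2
      obtain ⟨i, hi⟩ : ∃ i, (d + 1) / 2 = i := ⟨(d + 1) / 2, rfl⟩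
      rw [hi]
      have h2 : d + 1 = 2 * i := by omega
      rw [h2, pow_even_pair i, show n - 1 - d = n - 2 * i from by omega]
      ring
  rw [hbij]
  have herase : (∑ i ∈ (Finset.range (n / 2 + 1)).erase 0,
        2 * (-1 : ℂ) ^ i * (eulerianNumber (2*n + 1) (n - 2 * i) : ℂ))
        + 2 * (-1 : ℂ) ^ 0 * (eulerianNumber (2*n + 1) (n - 2 * 0) : ℂ)
      = ∑ i ∈ Finset.range (n / 2 + 1),
          2 * (-1 : ℂ) ^ i * (eulerianNumber (2*n + 1) (n - 2 * i) : ℂ) :=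
    Finset.sum_erase_add _ _ (by simp)
  have hmul : ∑ i ∈ Finset.range (n / 2 + 1),
        2 * (-1 : ℂ) ^ i * (eulerianNumber (2*n + 1) (n - 2 * i) : ℂ)
      = 2 * ∑ i ∈ Finset.range (n / 2 + 1),
          (-1 : ℂ) ^ i * (eulerianNumber (2*n + 1) (n - 2 * i) : ℂ) := by
    rw [Finset.mul_sum]
    apply Finset.sum_congr rfl
    intro i _
    ring
  rw [hmul] at herase
  have h0 : 2 * (-1 : ℂ) ^ 0 * (eulerianNumber (2*n + 1) (n - 2 * 0) : ℂ)
      = 2 * (eulerianNumber (2*n + 1) n : ℂ) := by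
    norm_num
  rw [h0] at herase
  linear_combination herase

lemma fold (n : ℕ) :
    ∑ j ∈ Finset.range (2*n + 1), (eulerianNumber (2*n + 1) j : ℂ) * Complex.I ^ j
      = Complex.I ^ n *
        (-(eulerianNumber (2*n + 1) n : ℂ) +
          2 * ∑ i ∈ Finset.range (n / 2 + 1),
            (-1 : ℂ) ^ i * (eulerianNumber (2*n + 1) (n - 2 * i) : ℂ)) := by
  have hsplit : ∑ j ∈ Finset.range (2*n + 1),
        (eulerianNumber (2*n + 1) j : ℂ) * Complex.I ^ j
      = (∑ j ∈ Finset.range (n + 1), (eulerianNumber (2*n + 1) j : ℂ) * Complex.I ^ j)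
        + ∑ d ∈ Finset.range n,
            (eulerianNumber (2*n + 1) (n + 1 + d) : ℂ) * Complex.I ^ (n + 1 + d) := by
    have h := Finset.sum_range_add
      (fun j => (eulerianNumber (2*n + 1) j : ℂ) * Complex.I ^ j) (n + 1) n
    rw [show (n + 1) + n = 2*n + 1 from by ring] at h
    exact h
  have e1 : ∑ j ∈ Finset.range (n + 1), (eulerianNumber (2*n + 1) j : ℂ) * Complex.I ^ j
      = (∑ j ∈ Finset.range n, (eulerianNumber (2*n + 1) j : ℂ) * Complex.I ^ j)
        + (eulerianNumber (2*n + 1) n : ℂ) * Complex.I ^ n :=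
    Finset.sum_range_succ _ n
  have e2 : ∑ d ∈ Finset.range n,
        (eulerianNumber (2*n + 1) (n - 1 - d) : ℂ) * Complex.I ^ (n - 1 - d)
      = ∑ j ∈ Finset.range n, (eulerianNumber (2*n + 1) j : ℂ) * Complex.I ^ j :=
    Finset.sum_range_reflect (fun j => (eulerianNumber (2*n + 1) j : ℂ) * Complex.I ^ j) n
  have hterm : ∀ d ∈ Finset.range n,
      (eulerianNumber (2*n + 1) (n - 1 - d) : ℂ) * Complex.I ^ (n - 1 - d)
        + (eulerianNumber (2*n + 1) (n + 1 + d) : ℂ) * Complex.I ^ (n + 1 + d)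
      = Complex.I ^ n * ((eulerianNumber (2*n + 1) (n - 1 - d) : ℂ)
          * ((-Complex.I) ^ (d + 1) + Complex.I ^ (d + 1))) := by
    intro d hd
    rw [Finset.mem_range] at hd
    have hsym : eulerianNumber (2*n + 1) (n + 1 + d) = eulerianNumber (2*n + 1) (n - 1 - d) := by
      have h := eulerian_symm (2*n) (n - 1 - d) (by omega)
      rw [show 2*n - (n - 1 - d) = n + 1 + d from by omega] at h
      exact h.symm
    rw [hsym]
    linear_combination ((eulerianNumber (2*n + 1) (n - 1 - d) : ℂ)) * pow_pair n d hd
  calc ∑ j ∈ Finset.range (2*n + 1), (eulerianNumber (2*n + 1) j : ℂ) * Complex.I ^ j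
      = (∑ j ∈ Finset.range n, (eulerianNumber (2*n + 1) j : ℂ) * Complex.I ^ j)
          + (eulerianNumber (2*n + 1) n : ℂ) * Complex.I ^ n
          + ∑ d ∈ Finset.range n,
              (eulerianNumber (2*n + 1) (n + 1 + d) : ℂ) * Complex.I ^ (n + 1 + d) := by
        rw [hsplit, e1]
    _ = (∑ d ∈ Finset.range n,
            (eulerianNumber (2*n + 1) (n - 1 - d) : ℂ) * Complex.I ^ (n - 1 - d))
          + (∑ d ∈ Finset.range n,
              (eulerianNumber (2*n + 1) (n + 1 + d) : ℂ) * Complex.I ^ (n + 1 + d))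
          + (eulerianNumber (2*n + 1) n : ℂ) * Complex.I ^ n := by
        rw [e2]; ring
    _ = (∑ d ∈ Finset.range n,
            ((eulerianNumber (2*n + 1) (n - 1 - d) : ℂ) * Complex.I ^ (n - 1 - d)
              + (eulerianNumber (2*n + 1) (n + 1 + d) : ℂ) * Complex.I ^ (n + 1 + d)))
          + (eulerianNumber (2*n + 1) n : ℂ) * Complex.I ^ n := by
        rw [Finset.sum_add_distrib]
    _ = (∑ d ∈ Finset.range n, Complex.I ^ n * ((eulerianNumber (2*n + 1) (n - 1 - d) : ℂ)
            * ((-Complex.I) ^ (d + 1) + Complex.I ^ (d + 1))))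
          + (eulerianNumber (2*n + 1) n : ℂ) * Complex.I ^ n := by
        rw [Finset.sum_congr rfl hterm]
    _ = Complex.I ^ n * (∑ d ∈ Finset.range n, (eulerianNumber (2*n + 1) (n - 1 - d) : ℂ)
            * ((-Complex.I) ^ (d + 1) + Complex.I ^ (d + 1)))
          + (eulerianNumber (2*n + 1) n : ℂ) * Complex.I ^ n := by
        rw [Finset.mul_sum]
    _ = Complex.I ^ n *
          (-(eulerianNumber (2*n + 1) n : ℂ) +
            2 * ∑ i ∈ Finset.range (n / 2 + 1),
              (-1 : ℂ) ^ i * (eulerianNumber (2*n + 1) (n - 2 * i) : ℂ)) := by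
        rw [key8 n]
        ring

lemma Xc_eq (n : ℕ) :
    (-(eulerianNumber (2*n + 1) n : ℂ) +
        2 * ∑ i ∈ Finset.range (n / 2 + 1),
          (-1 : ℂ) ^ i * (eulerianNumber (2*n + 1) (n - 2 * i) : ℂ))
      = 2 ^ n * (eulerNumber (2*n + 1) : ℂ) := by
  have h2 := (Asum_eulerian n).symm.trans (Atotal n)
  rw [fold n] at h2
  have hIn : (Complex.I) ^ n ≠ 0 := pow_ne_zero _ Complex.I_ne_zero
  apply mul_left_cancel₀ hIn
  rw [h2, mul_pow]
  ring

end EulerAux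


/-- E_{2n+1} = (1/2^n)(−A_{2n+1,n} + 2 Σ_{i=0}^{⌊n/2⌋} (−1)^i A_{2n+1,n−2i}). -/
theorem euler_eq_eulerianNumber_combination (n : ℕ) :
    (eulerNumber (2 * n + 1) : ℝ) =
      (1 / 2 ^ n) *
        (-(eulerianNumber (2 * n + 1) n : ℝ) +
          2 * ∑ i ∈ Finset.range (n / 2 + 1),
            (-1) ^ i * (eulerianNumber (2 * n + 1) (n - 2 * i) : ℝ)) := by
  have key := EulerAux.Xc_eq n
  have hre : (-(eulerianNumber (2 * n + 1) n : ℝ) +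
      2 * ∑ i ∈ Finset.range (n / 2 + 1),
        (-1 : ℝ) ^ i * (eulerianNumber (2 * n + 1) (n - 2 * i) : ℝ))
      = 2 ^ n * (eulerNumber (2 * n + 1) : ℝ) := by
    have hcast : (((-(eulerianNumber (2 * n + 1) n : ℝ) +
        2 * ∑ i ∈ Finset.range (n / 2 + 1),
          (-1 : ℝ) ^ i * (eulerianNumber (2 * n + 1) (n - 2 * i) : ℝ)) : ℝ) : ℂ)
        = (((2 ^ n * (eulerNumber (2 * n + 1) : ℝ) : ℝ)) : ℂ) := by
      push_cast
      linear_combination key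
    exact_mod_cast hcast
  rw [hre]
  have h2 : (2:ℝ)^n ≠ 0 := by positivity
  field_simp
end

section
/- For all n ≥ k ≥ 1, a_{2n,k} = (n−k)·a_{2n−1,k−1} + (k+1)·a_{2n−1,k}, where a_{m,k} counts permutations of [m] with k even descents and no odd descents. -/
open Finset

namespace ANumRec
open Equiv

lemma mem_descentSet {n : ℕ} {π : Equiv.Perm (Fin n)} {i : ℕ} :
    i ∈ descentSet π ↔ ∃ h : i + 1 < n, π ⟨i + 1, h⟩ < π ⟨i, Nat.lt_of_succ_lt h⟩ := by
  simp only [descentSet, Finset.mem_filter, Finset.mem_range]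
  exact ⟨fun h => h.2, fun h => ⟨by obtain ⟨h', _⟩ := h; omega, h⟩⟩

variable {m : ℕ}

/-- position of the top element for slot `s` -/
def pPos (m : ℕ) (s : Fin (m+1)) : Fin (2*m+1+1) := ⟨2*(m - s.val)+1, by omega⟩

/-- rotation constant `2s` in `Fin (2m+1)` -/
def rotC (m : ℕ) (s : Fin (m+1)) : Fin (2*m+1) := ⟨2*s.val % (2*m+1), Nat.mod_lt _ (by omega)⟩

lemma rotC_val (s : Fin (m+1)) : (rotC m s).val = 2*s.val :=
  Nat.mod_eq_of_lt (by omega)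

/-- insert top at slot s after rotating τ by 2s -/
def slotPerm (τ : Perm (Fin (2*m+1))) (s : Fin (m+1)) : Perm (Fin (2*m+1+1)) :=
  (finSuccEquiv' (pPos m s)).trans
    ((((Equiv.addRight (rotC m s)).trans τ).optionCongr).trans
      (finSuccEquiv' (Fin.last (2*m+1))).symm)

lemma slotPerm_apply_pPos (τ : Perm (Fin (2*m+1))) (s : Fin (m+1)) :
    slotPerm τ s (pPos m s) = Fin.last (2*m+1) := by
  simp [slotPerm, finSuccEquiv'_at, Equiv.optionCongr, finSuccEquiv'_symm_none]

lemma slotPerm_apply_lt (τ : Perm (Fin (2*m+1))) (s : Fin (m+1)) (x : Fin (2*m+1+1))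
    (hx : x.val < 2*(m - s.val)+1) :
    slotPerm τ s x = Fin.castSucc (τ ⟨x.val + 2*s.val, by omega⟩) := by
  have hs : s.val ≤ m := by omega
  have hx' : x.val < 2*m+1 := by omega
  have h1 : x = Fin.castSucc ⟨x.val, hx'⟩ := by ext; simp
  conv_lhs => rw [h1]
  simp only [slotPerm, Equiv.trans_apply]
  rw [finSuccEquiv'_below (by simp [pPos, Fin.lt_def]; omega)]
  simp only [Equiv.optionCongr_apply, Option.map_some, Equiv.trans_apply, Equiv.coe_addRight]
  rw [finSuccEquiv'_symm_some_below (by simp [Fin.lt_def, Fin.last]; exact Nat.le_of_lt_succ (τ _).isLt)]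
  congr 2
  ext
  simp [Fin.add_def, rotC_val]
  omega

lemma slotPerm_apply_gt (τ : Perm (Fin (2*m+1))) (s : Fin (m+1)) (x : Fin (2*m+1+1))
    (hx : 2*(m - s.val)+1 < x.val) :
    slotPerm τ s x = Fin.castSucc (τ ⟨x.val + 2*s.val - (2*m+2), by omega⟩) := by
  have hs : s.val ≤ m := by omega
  have hx2 : x.val < 2*m+2 := x.isLt
  have hxpos : 1 ≤ x.val := by omega
  have h1 : x = Fin.succ ⟨x.val - 1, by omega⟩ := by ext; simp; omega
  conv_lhs => rw [h1]
  simp only [slotPerm, Equiv.trans_apply]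
  rw [finSuccEquiv'_above (by simp [pPos, Fin.le_def]; omega)]
  simp only [Equiv.optionCongr_apply, Option.map_some, Equiv.trans_apply, Equiv.coe_addRight]
  rw [finSuccEquiv'_symm_some_below (by simp [Fin.lt_def, Fin.last]; exact Nat.le_of_lt_succ (τ _).isLt)]
  congr 2
  ext
  simp [Fin.add_def, rotC_val]
  have h2 : (x.val - 1 + 2*s.val) = (x.val + 2*s.val - (2*m+2)) + (2*m+1) := by omega
  rw [h2, Nat.add_mod_right]
  exact Nat.mod_eq_of_lt (by omega)


/-- index transform for descents when inserting at slot `s` -/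
def shiftIdx (m sv t : ℕ) : ℕ := if 2*sv ≤ t then t - 2*sv else t + (2*m+2) - 2*sv

lemma descentSet_slotPerm (τ : Perm (Fin (2*m+1))) (s : Fin (m+1)) :
    descentSet (slotPerm τ s) =
      ((descentSet τ).filter (fun t => t+1 ≠ 2*s.val)).image (shiftIdx m s.val)
      ∪ (if s.val = 0 then (∅ : Finset ℕ) else {2*(m - s.val)+1}) := by
  have hs : s.val ≤ m := by omega
  ext i
  simp only [Finset.mem_union, Finset.mem_image, Finset.mem_filter, Finset.mem_singleton,
    shiftIdx]
  constructor
  · intro hi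
    obtain ⟨h, hlt⟩ := mem_descentSet.mp hi
    rcases lt_trichotomy i (2*(m - s.val)+1) with hc | hc | hc
    · rcases Nat.lt_or_ge (i+1) (2*(m-s.val)+1) with hc2 | hc2
      · -- i+1 < p : descent from τ at i+2s
        left
        have e0 : slotPerm τ s ⟨i, Nat.lt_of_succ_lt h⟩
            = Fin.castSucc (τ ⟨i + 2*s.val, by omega⟩) :=
          slotPerm_apply_lt τ s _ (by exact hc)
        have e1 : slotPerm τ s ⟨i+1, h⟩
            = Fin.castSucc (τ ⟨i + 1 + 2*s.val, by omega⟩) :=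
          slotPerm_apply_lt τ s _ (by exact hc2)
        rw [e0, e1, Fin.castSucc_lt_castSucc_iff] at hlt
        refine ⟨i + 2*s.val, ⟨?_, by omega⟩, by split <;> omega⟩
        rw [mem_descentSet]
        refine ⟨by omega, ?_⟩
        simpa only [show i + 2*s.val + 1 = i + 1 + 2*s.val from by omega] using hlt
      · -- i+1 = p : no descent, contradiction
        exfalso
        have e0 : slotPerm τ s ⟨i, Nat.lt_of_succ_lt h⟩
            = Fin.castSucc (τ ⟨i + 2*s.val, by omega⟩) :=
          slotPerm_apply_lt τ s _ (by exact hc)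
        have e1 : slotPerm τ s ⟨i+1, h⟩ = Fin.last (2*m+1) := by
          have : (⟨i+1, h⟩ : Fin (2*m+1+1)) = pPos m s := by
            simp only [pPos, Fin.mk.injEq]; omega
          rw [this, slotPerm_apply_pPos]
        rw [e0, e1] at hlt
        exact absurd hlt (by simp [Fin.lt_def])
    · -- i = p : descent iff s ≠ 0
      right
      have hsv : s.val ≠ 0 := by omega
      simp [hsv, hc]
    · -- i > p : descent from τ at i + 2s - (2m+2)
      left
      have e0 : slotPerm τ s ⟨i, Nat.lt_of_succ_lt h⟩
          = Fin.castSucc (τ ⟨i + 2*s.val - (2*m+2), by omega⟩) :=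
        slotPerm_apply_gt τ s _ (by exact hc)
      have e1 : slotPerm τ s ⟨i+1, h⟩
          = Fin.castSucc (τ ⟨i + 1 + 2*s.val - (2*m+2), by omega⟩) :=
        slotPerm_apply_gt τ s _ (by exact (by omega : 2*(m-s.val)+1 < i+1))
      rw [e0, e1, Fin.castSucc_lt_castSucc_iff] at hlt
      refine ⟨i + 2*s.val - (2*m+2), ⟨?_, by omega⟩, by split <;> omega⟩
      rw [mem_descentSet]
      refine ⟨by omega, ?_⟩
      simpa only [show i + 2*s.val - (2*m+2) + 1 = i + 1 + 2*s.val - (2*m+2) from by omega]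
        using hlt
  · rintro (⟨t, ⟨ht, hne⟩, rfl⟩ | hsp)
    · obtain ⟨h't, hlt⟩ := mem_descentSet.mp ht
      by_cases hcase : 2*s.val ≤ t
      · -- i = t - 2s, i + 1 < p
        simp only [if_pos hcase]
        rw [mem_descentSet]
        refine ⟨by omega, ?_⟩
        have e0 : slotPerm τ s ⟨t - 2*s.val, by omega⟩
            = Fin.castSucc (τ ⟨t - 2*s.val + 2*s.val, by omega⟩) :=
          slotPerm_apply_lt τ s _ (by show t - 2*s.val < 2*(m - s.val)+1; omega)
        have e1 : slotPerm τ s ⟨t - 2*s.val + 1, by omega⟩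
            = Fin.castSucc (τ ⟨t - 2*s.val + 1 + 2*s.val, by omega⟩) :=
          slotPerm_apply_lt τ s _ (by show t - 2*s.val + 1 < 2*(m - s.val)+1; omega)
        rw [e0, e1, Fin.castSucc_lt_castSucc_iff]
        have h2 : t - 2*s.val + 2*s.val = t := by omega
        have h3 : t - 2*s.val + 1 + 2*s.val = t + 1 := by omega
        simpa only [h2, h3] using hlt
      · -- i = t + 2m+2 - 2s, i > p
        simp only [if_neg hcase]
        rw [mem_descentSet]
        refine ⟨by omega, ?_⟩
        have e0 : slotPerm τ s ⟨t + (2*m+2) - 2*s.val, by omega⟩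
            = Fin.castSucc (τ ⟨t + (2*m+2) - 2*s.val + 2*s.val - (2*m+2), by omega⟩) :=
          slotPerm_apply_gt τ s _ (by show 2*(m - s.val)+1 < t + (2*m+2) - 2*s.val; omega)
        have e1 : slotPerm τ s ⟨t + (2*m+2) - 2*s.val + 1, by omega⟩
            = Fin.castSucc (τ ⟨t + (2*m+2) - 2*s.val + 1 + 2*s.val - (2*m+2), by omega⟩) :=
          slotPerm_apply_gt τ s _ (by show 2*(m - s.val)+1 < t + (2*m+2) - 2*s.val + 1; omega)
        rw [e0, e1, Fin.castSucc_lt_castSucc_iff]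
        have h2 : t + (2*m+2) - 2*s.val + 2*s.val - (2*m+2) = t := by omega
        have h3 : t + (2*m+2) - 2*s.val + 1 + 2*s.val - (2*m+2) = t + 1 := by omega
        simpa only [h2, h3] using hlt
    · -- special element
      by_cases hsv : s.val = 0
      · simp [hsv] at hsp
      · simp only [if_neg hsv, Finset.mem_singleton] at hsp
        subst hsp
        rw [mem_descentSet]
        refine ⟨by omega, ?_⟩
        have e0 : slotPerm τ s ⟨2*(m - s.val)+1, by omega⟩ = Fin.last (2*m+1) := by
          have : (⟨2*(m-s.val)+1, by omega⟩ : Fin (2*m+1+1)) = pPos m s := rfl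
          rw [this, slotPerm_apply_pPos]
        have e1 : slotPerm τ s ⟨2*(m - s.val)+1+1, by omega⟩
            = Fin.castSucc (τ ⟨2*(m-s.val)+1+1 + 2*s.val - (2*m+2), by omega⟩) :=
          slotPerm_apply_gt τ s _ (by show 2*(m - s.val)+1 < 2*(m - s.val)+1+1; omega)
        rw [e0, e1]
        exact Fin.castSucc_lt_last _


lemma descentSet_bound {n : ℕ} {π : Perm (Fin n)} {t : ℕ} (ht : t ∈ descentSet π) :
    t + 1 < n := (mem_descentSet.mp ht).1

lemma filter_parity_descent (τ : Perm (Fin (2*m+1))) (s : Fin (m+1))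
    (pr : ℕ → Prop) [DecidablePred pr] (hpr : ∀ a b : ℕ, a % 2 = b % 2 → (pr a ↔ pr b)) :
    ((descentSet (slotPerm τ s)).filter pr).card =
      ((((descentSet τ).filter (fun t => t+1 ≠ 2*s.val)).filter pr).card)
      + (if s.val ≠ 0 ∧ pr (2*(m - s.val)+1) then 1 else 0) := by
  have hs : s.val ≤ m := by omega
  rw [descentSet_slotPerm, Finset.filter_union, Finset.card_union_of_disjoint, Finset.filter_image]
  · congr 1
    · rw [show (((descentSet τ).filter (fun t => t+1 ≠ 2*s.val)).filter
          fun a => pr (shiftIdx m s.val a)) = ((descentSet τ).filter (fun t => t+1 ≠ 2*s.val)).filter pr from ?_]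
      · apply Finset.card_image_of_injOn
        intro t1 h1 t2 h2 heq
        simp only [Finset.mem_coe, Finset.mem_filter] at h1 h2
        have b1 := descentSet_bound h1.1.1
        have b2 := descentSet_bound h2.1.1
        simp only [shiftIdx] at heq
        split_ifs at heq <;> omega
      · apply Finset.filter_congr
        intro t ht
        simp only [Finset.mem_filter] at ht
        have b1 := descentSet_bound ht.1
        have : shiftIdx m s.val t % 2 = t % 2 := by
          simp only [shiftIdx]; split_ifs <;> omega
        exact (hpr _ _ this)
    · by_cases hsv : s.val = 0
      · rw [if_pos hsv, if_neg (by tauto), Finset.filter_empty, Finset.card_empty]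
      · rw [if_neg hsv, Finset.filter_singleton]
        by_cases hp : pr (2*(m - s.val)+1)
        · rw [if_pos hp, if_pos ⟨hsv, hp⟩, Finset.card_singleton]
        · rw [if_neg hp, if_neg (by tauto), Finset.card_empty]
  · apply Finset.disjoint_filter_filter
    rw [Finset.disjoint_left]
    intro i hi hi2
    simp only [Finset.mem_image, Finset.mem_filter] at hi
    obtain ⟨t, ⟨ht, hne⟩, rfl⟩ := hi
    have b1 := descentSet_bound ht
    by_cases hsv : s.val = 0
    · simp [hsv] at hi2
    · rw [if_neg hsv, Finset.mem_singleton] at hi2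
      simp only [shiftIdx] at hi2
      split_ifs at hi2 <;> omega

lemma odes_slotPerm (τ : Perm (Fin (2*m+1))) (s : Fin (m+1)) :
    odes (slotPerm τ s) = odes τ := by
  unfold odes
  rw [filter_parity_descent τ s (fun i => Even i) (by intro a b h; simp only [Nat.even_iff, h])]
  rw [if_neg (by rintro ⟨-, h⟩; rcases h with ⟨c, hc⟩; omega)]
  rw [Finset.filter_comm]
  by_cases hsv : s.val = 0
  · rw [show ((descentSet τ).filter (fun i => Even i)).filter (fun t => t+1 ≠ 2*s.val) =
        (descentSet τ).filter (fun i => Even i) from ?_]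
    · omega
    · apply Finset.filter_true_of_mem
      intro t ht
      omega
  · rw [show ((descentSet τ).filter (fun i => Even i)).filter (fun t => t+1 ≠ 2*s.val) =
        (descentSet τ).filter (fun i => Even i) from ?_]
    · omega
    · apply Finset.filter_true_of_mem
      intro t ht
      simp only [Finset.mem_filter] at ht
      rcases ht.2 with ⟨c, hc⟩
      omega

lemma edes_slotPerm (τ : Perm (Fin (2*m+1))) (s : Fin (m+1)) :
    edes (slotPerm τ s) =
      if s.val = 0 then edes τ
      else (if 2*s.val - 1 ∈ descentSet τ then edes τ else edes τ + 1) := by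
  unfold edes
  rw [filter_parity_descent τ s (fun i => Odd i) (by intro a b h; simp only [Nat.odd_iff, h])]
  rw [Finset.filter_comm]
  by_cases hsv : s.val = 0
  · rw [if_pos hsv, if_neg (by tauto)]
    rw [show ((descentSet τ).filter (fun i => Odd i)).filter (fun t => t+1 ≠ 2*s.val) =
        (descentSet τ).filter (fun i => Odd i) from Finset.filter_true_of_mem (by intro t ht; omega)]
    omega
  · rw [if_neg hsv, if_pos ⟨hsv, ⟨m - s.val, by omega⟩⟩]
    have hrw : ((descentSet τ).filter (fun i => Odd i)).filter (fun t => t+1 ≠ 2*s.val) =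
        ((descentSet τ).filter (fun i => Odd i)).filter (fun t => t ≠ 2*s.val - 1) := by
      apply Finset.filter_congr
      intro t ht
      omega
    rw [hrw, Finset.filter_ne']
    by_cases hin : 2*s.val - 1 ∈ descentSet τ
    · rw [if_pos hin]
      have hmem : 2*s.val - 1 ∈ (descentSet τ).filter (fun i => Odd i) :=
        Finset.mem_filter.mpr ⟨hin, ⟨s.val - 1, by omega⟩⟩
      rw [Finset.card_erase_of_mem hmem]
      have := Finset.card_pos.mpr ⟨_, hmem⟩
      omega
    · rw [if_neg hin, Finset.erase_eq_of_notMem (fun hmem => hin (Finset.mem_filter.mp hmem).1)]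


lemma optionCongr_removeNone {α β : Type*} (E : Option α ≃ Option β) (h : E none = none) :
    Equiv.optionCongr (E.removeNone) = E := by
  apply Equiv.ext
  intro x
  cases x with
  | none => simp [Equiv.optionCongr_apply, h]
  | some a =>
    have hex : ∃ b, E (some a) = some b := by
      rcases hE : E (some a) with _ | b
      · exact absurd (E.injective (hE.trans h.symm)) (by simp)
      · exact ⟨b, rfl⟩
    show Equiv.optionCongr E.removeNone (some a) = E (some a)
    rw [Equiv.optionCongr_apply, Option.map_some]
    exact Equiv.removeNone_some E hex

/-- inverse construction -/
def recover (σ : Perm (Fin (2*m+1+1))) (s : Fin (m+1)) : Perm (Fin (2*m+1)) :=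
  (Equiv.addRight (rotC m s)).symm.trans
    (Equiv.removeNone ((finSuccEquiv' (pPos m s)).symm.trans
      (σ.trans (finSuccEquiv' (Fin.last (2*m+1))))))

lemma recover_slotPerm (τ : Perm (Fin (2*m+1))) (s : Fin (m+1)) :
    recover (slotPerm τ s) s = τ := by
  unfold recover slotPerm
  have h1 : (finSuccEquiv' (pPos m s)).symm.trans
      (((finSuccEquiv' (pPos m s)).trans
        ((((Equiv.addRight (rotC m s)).trans τ).optionCongr).trans
          (finSuccEquiv' (Fin.last (2*m+1))).symm)).trans
        (finSuccEquiv' (Fin.last (2*m+1))))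
      = ((Equiv.addRight (rotC m s)).trans τ).optionCongr := by
    ext x
    simp [Equiv.trans_apply]
  rw [h1, Equiv.removeNone_optionCongr]
  ext x
  simp [Equiv.trans_apply]

/-- the slot of a permutation, from the position of the top element -/
def slotOf (σ : Perm (Fin (2*m+1+1))) : Fin (m+1) :=
  ⟨m - ((σ.symm (Fin.last (2*m+1))).val - 1)/2, by omega⟩

lemma slotOf_slotPerm (τ : Perm (Fin (2*m+1))) (s : Fin (m+1)) :
    slotOf (slotPerm τ s) = s := by
  have h1 : (slotPerm τ s).symm (Fin.last (2*m+1)) = pPos m s := by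
    rw [← slotPerm_apply_pPos τ s, Equiv.symm_apply_apply]
  ext
  simp only [slotOf, h1, pPos]
  omega

lemma top_pos_odd (σ : Perm (Fin (2*m+1+1))) (h : odes σ = 0) :
    (σ.symm (Fin.last (2*m+1))).val % 2 = 1 := by
  by_contra hodd
  set P := σ.symm (Fin.last (2*m+1)) with hP
  have hPlt : P.val < 2*m+2 := P.isLt
  have hPle : P.val ≤ 2*m := by omega
  have hdesc : P.val ∈ descentSet σ := by
    rw [mem_descentSet]
    refine ⟨by omega, ?_⟩
    have e0 : σ ⟨P.val, by omega⟩ = Fin.last (2*m+1) := by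
      rw [show (⟨P.val, by omega⟩ : Fin (2*m+1+1)) = P from by ext; rfl, hP,
        Equiv.apply_symm_apply]
    have hne : σ ⟨P.val + 1, by omega⟩ ≠ Fin.last (2*m+1) := by
      intro hcon
      have := σ.injective (hcon.trans e0.symm)
      simp only [Fin.mk.injEq] at this
      omega
    rw [e0]
    rcases Fin.lt_or_lt_of_ne hne with hlt | hlt
    · exact hlt
    · exact absurd hlt (by simp [Fin.lt_def, Fin.last]; omega)
  have : P.val ∈ (descentSet σ).filter (fun i => Even i) :=
    Finset.mem_filter.mpr ⟨hdesc, by rw [Nat.even_iff]; omega⟩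
  have := Finset.card_pos.mpr ⟨_, this⟩
  unfold odes at h
  omega

lemma slotPerm_recover (σ : Perm (Fin (2*m+1+1))) (h : odes σ = 0) :
    slotPerm (recover σ (slotOf σ)) (slotOf σ) = σ := by
  have hodd := top_pos_odd σ h
  have hppos : pPos m (slotOf σ) = σ.symm (Fin.last (2*m+1)) := by
    ext
    simp only [pPos, slotOf]
    have := (σ.symm (Fin.last (2*m+1))).isLt
    omega
  have hnone : ((finSuccEquiv' (pPos m (slotOf σ))).symm.trans
      (σ.trans (finSuccEquiv' (Fin.last (2*m+1))))) none = none := by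
    simp only [Equiv.trans_apply, finSuccEquiv'_symm_none, hppos,
      Equiv.apply_symm_apply, finSuccEquiv'_at]
  unfold slotPerm recover
  rw [show (Equiv.addRight (rotC m (slotOf σ))).trans
      ((Equiv.addRight (rotC m (slotOf σ))).symm.trans
        (Equiv.removeNone ((finSuccEquiv' (pPos m (slotOf σ))).symm.trans
          (σ.trans (finSuccEquiv' (Fin.last (2*m+1))))))) =
      Equiv.removeNone ((finSuccEquiv' (pPos m (slotOf σ))).symm.trans
          (σ.trans (finSuccEquiv' (Fin.last (2*m+1))))) from by ext x; simp]
  rw [optionCongr_removeNone _ hnone]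
  ext x
  simp [Equiv.trans_apply]


lemma edes_slotPerm' (τ : Perm (Fin (2*m+1))) (s : Fin (m+1)) :
    edes (slotPerm τ s) =
      if s.val = 0 ∨ (s.val ≠ 0 ∧ 2*s.val - 1 ∈ descentSet τ) then edes τ else edes τ + 1 := by
  rw [edes_slotPerm]
  by_cases h0 : s.val = 0
  · simp [h0]
  · by_cases hmem : 2*s.val - 1 ∈ descentSet τ
    · rw [if_neg h0, if_pos hmem, if_pos (Or.inr ⟨h0, hmem⟩)]
    · rw [if_neg h0, if_neg hmem, if_neg (by tauto)]

lemma count_A (τ : Perm (Fin (2*m+1))) :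
    ((Finset.univ : Finset (Fin (m+1))).filter
      (fun s => s.val = 0 ∨ (s.val ≠ 0 ∧ 2*s.val - 1 ∈ descentSet τ))).card = edes τ + 1 := by
  rw [Finset.filter_or, Finset.card_union_of_disjoint]
  · have h1 : (Finset.univ : Finset (Fin (m+1))).filter (fun s => s.val = 0)
        = {⟨0, by omega⟩} := by
      ext s
      simp only [Finset.mem_filter, Finset.mem_univ, true_and, Finset.mem_singleton, Fin.ext_iff]
    have h2 : ((Finset.univ : Finset (Fin (m+1))).filter
        (fun s => s.val ≠ 0 ∧ 2*s.val - 1 ∈ descentSet τ)).card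
        = ((descentSet τ).filter (fun i => Odd i)).card := by
      apply Finset.card_nbij' (fun s => 2*s.val - 1)
        (fun t => (⟨min m ((t+1)/2), by omega⟩ : Fin (m+1)))
      · intro s hsm
        simp only [Finset.mem_coe, Finset.mem_filter, Finset.mem_univ, true_and] at hsm ⊢
        exact ⟨hsm.2, ⟨s.val - 1, by omega⟩⟩
      · intro t htm
        simp only [Finset.mem_coe, Finset.mem_filter, Finset.mem_univ, true_and] at htm ⊢
        have hb := descentSet_bound htm.1
        have hodd := htm.2
        rw [Nat.odd_iff] at hodd
        have hmin : min m ((t+1)/2) = (t+1)/2 := by omega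
        constructor
        · simp only [hmin]; omega
        · rw [show (2 * min m ((t+1)/2) - 1) = t from by omega]
          exact htm.1
      · intro s hsm
        simp only [Finset.mem_coe, Finset.mem_filter, Finset.mem_univ, true_and] at hsm
        have hs := s.isLt
        ext
        simp only []
        omega
      · intro t htm
        simp only [Finset.mem_coe, Finset.mem_filter, Finset.mem_univ, true_and] at htm
        have hb := descentSet_bound htm.1
        have hodd := htm.2
        rw [Nat.odd_iff] at hodd
        simp only []
        omega
    rw [h1, h2, Finset.card_singleton]
    unfold edes
    omega
  · rw [Finset.disjoint_left]
    intro s hs1 hs2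
    simp only [Finset.mem_filter] at hs1 hs2
    exact hs2.2.1 hs1.2

lemma slot_count (τ : Perm (Fin (2*m+1))) (k : ℕ) :
    ((Finset.univ : Finset (Fin (m+1))).filter (fun s => edes (slotPerm τ s) = k)).card =
      (if edes τ = k then k + 1 else 0) + (if edes τ + 1 = k then m + 1 - k else 0) := by
  have hA := count_A τ
  have hle : edes τ + 1 ≤ m + 1 := by
    rw [← hA]
    calc _ ≤ (Finset.univ : Finset (Fin (m+1))).card := Finset.card_filter_le _ _
    _ = m + 1 := by simp
  by_cases h1 : edes τ = k
  · have hset : ((Finset.univ : Finset (Fin (m+1))).filter (fun s => edes (slotPerm τ s) = k))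
        = ((Finset.univ : Finset (Fin (m+1))).filter
          (fun s => s.val = 0 ∨ (s.val ≠ 0 ∧ 2*s.val - 1 ∈ descentSet τ))) := by
      apply Finset.filter_congr
      intro s _
      rw [edes_slotPerm' τ s]
      split_ifs with hAs <;> simp only [hAs, iff_true, iff_false] <;> omega
    have := congrArg Finset.card hset
    split_ifs <;> omega
  · by_cases h2 : edes τ + 1 = k
    · have hsplit := Finset.card_filter_add_card_filter_not
        (s := (Finset.univ : Finset (Fin (m+1))))
        (p := fun s => s.val = 0 ∨ (s.val ≠ 0 ∧ 2*s.val - 1 ∈ descentSet τ))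
      have hset : ((Finset.univ : Finset (Fin (m+1))).filter (fun s => edes (slotPerm τ s) = k))
          = ((Finset.univ : Finset (Fin (m+1))).filter
            (fun s => ¬(s.val = 0 ∨ (s.val ≠ 0 ∧ 2*s.val - 1 ∈ descentSet τ)))) := by
        apply Finset.filter_congr
        intro s _
        rw [edes_slotPerm' τ s]
        split_ifs with hAs <;> simp only [hAs, iff_true, iff_false, not_true_eq_false, not_false_eq_true] <;> omega
      have := congrArg Finset.card hset
      simp only [Finset.card_univ, Fintype.card_fin] at hsplit
      split_ifs <;> omega
    · have hempty : ((Finset.univ : Finset (Fin (m+1))).filter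
          (fun s => edes (slotPerm τ s) = k)) = ∅ := by
        apply Finset.filter_false_of_mem
        intro s _
        rw [edes_slotPerm' τ s]
        split_ifs with hAs <;> omega
      have := congrArg Finset.card hempty
      simp only [Finset.card_empty] at this
      split_ifs <;> omega

lemma key_card (k : ℕ) :
    ((Finset.univ : Finset (Perm (Fin (2*m+1+1)))).filter
        (fun σ => edes σ = k ∧ odes σ = 0)).card
    = ((Finset.univ : Finset (Perm (Fin (2*m+1)) × Fin (m+1))).filter
        (fun q => odes q.1 = 0 ∧ edes (slotPerm q.1 q.2) = k)).card := by
  apply Finset.card_nbij' (fun σ => (recover σ (slotOf σ), slotOf σ))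
    (fun q => slotPerm q.1 q.2)
  · intro σ hσ
    simp only [Finset.mem_coe, Finset.mem_filter, Finset.mem_univ, true_and] at hσ ⊢
    have hrec := slotPerm_recover σ hσ.2
    constructor
    · have h := odes_slotPerm (recover σ (slotOf σ)) (slotOf σ)
      rw [hrec] at h
      omega
    · rw [hrec]
      exact hσ.1
  · intro q hq
    simp only [Finset.mem_coe, Finset.mem_filter, Finset.mem_univ, true_and] at hq ⊢
    refine ⟨hq.2, ?_⟩
    rw [odes_slotPerm]
    exact hq.1
  · intro σ hσ
    simp only [Finset.mem_coe, Finset.mem_filter, Finset.mem_univ, true_and] at hσ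
    exact slotPerm_recover σ hσ.2
  · rintro ⟨τ, s⟩ hq
    have h1 : slotOf (slotPerm τ s) = s := slotOf_slotPerm τ s
    simp only [Prod.mk.injEq]
    refine ⟨?_, h1⟩
    rw [h1, recover_slotPerm]

lemma prod_card (k : ℕ) :
    ((Finset.univ : Finset (Perm (Fin (2*m+1)) × Fin (m+1))).filter
        (fun q => odes q.1 = 0 ∧ edes (slotPerm q.1 q.2) = k)).card
    = ∑ τ ∈ (Finset.univ.filter (fun τ : Perm (Fin (2*m+1)) => odes τ = 0)),
        ((Finset.univ.filter (fun s : Fin (m+1) => edes (slotPerm τ s) = k)).card) := by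
  rw [Finset.card_filter, Fintype.sum_prod_type, Finset.sum_filter]
  apply Finset.sum_congr rfl
  intro τ _
  by_cases h : odes τ = 0
  · rw [if_pos h, Finset.card_filter]
    apply Finset.sum_congr rfl
    intro s _
    simp [h]
  · rw [if_neg h]
    apply Finset.sum_eq_zero
    intro s _
    simp [h]

lemma main_count (m k : ℕ) (hk : 1 ≤ k) :
    ((Finset.univ : Finset (Perm (Fin (2*m+1+1)))).filter
        (fun σ => edes σ = k ∧ odes σ = 0)).card
    = (m + 1 - k) * ((Finset.univ : Finset (Perm (Fin (2*m+1)))).filter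
        (fun τ => edes τ = k - 1 ∧ odes τ = 0)).card
      + (k + 1) * ((Finset.univ : Finset (Perm (Fin (2*m+1)))).filter
        (fun τ => edes τ = k ∧ odes τ = 0)).card := by
  rw [key_card, prod_card]
  rw [Finset.sum_congr rfl (fun τ _ => slot_count τ k), Finset.sum_add_distrib]
  have A1 : (∑ τ ∈ Finset.univ.filter (fun τ : Perm (Fin (2*m+1)) => odes τ = 0),
        (if edes τ = k then k + 1 else 0))
      = (k + 1) * ((Finset.univ : Finset (Perm (Fin (2*m+1)))).filter
        (fun τ => edes τ = k ∧ odes τ = 0)).card := by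
    rw [← Finset.sum_filter, Finset.filter_filter, Finset.sum_const, smul_eq_mul]
    have hset : (Finset.univ.filter (fun τ : Perm (Fin (2*m+1)) =>
        odes τ = 0 ∧ edes τ = k))
        = (Finset.univ.filter (fun τ : Perm (Fin (2*m+1)) =>
          edes τ = k ∧ odes τ = 0)) := by
      apply Finset.filter_congr
      intro τ _
      tauto
    rw [congrArg Finset.card hset]
    ring
  have A2 : (∑ τ ∈ Finset.univ.filter (fun τ : Perm (Fin (2*m+1)) => odes τ = 0),
        (if edes τ + 1 = k then m + 1 - k else 0))
      = (m + 1 - k) * ((Finset.univ : Finset (Perm (Fin (2*m+1)))).filter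
        (fun τ => edes τ = k - 1 ∧ odes τ = 0)).card := by
    rw [← Finset.sum_filter, Finset.filter_filter, Finset.sum_const, smul_eq_mul]
    have hset : (Finset.univ.filter (fun τ : Perm (Fin (2*m+1)) =>
        odes τ = 0 ∧ edes τ + 1 = k))
        = (Finset.univ.filter (fun τ : Perm (Fin (2*m+1)) =>
          edes τ = k - 1 ∧ odes τ = 0)) := by
      apply Finset.filter_congr
      intro τ _
      constructor
      · rintro ⟨ha, hb⟩; exact ⟨by omega, ha⟩
      · rintro ⟨ha, hb⟩; exact ⟨hb, by omega⟩
    rw [congrArg Finset.card hset]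
    ring
  rw [A1, A2]
  ring

end ANumRec

/-- a_{2n,k} = (n−k) a_{2n−1,k−1} + (k+1) a_{2n−1,k}. -/
theorem aNum_even_rec (n k : ℕ) (h1 : 1 ≤ k) (h2 : k ≤ n) :
    aNum (2 * n) k = (n - k) * aNum (2 * n - 1) (k - 1) + (k + 1) * aNum (2 * n - 1) k := by
  obtain ⟨m, rfl⟩ : ∃ m, n = m + 1 := ⟨n - 1, by omega⟩
  have e2 : 2 * (m + 1) - 1 = 2*m+1 := by omega
  rw [e2]
  have e1 : 2 * (m + 1) = 2*m+1+1 := by ring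
  rw [e1]
  unfold aNum
  rw [ANumRec.main_count m k h1]
end
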